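/- arXiv:2101.02881 — 3 statements merged into one kernel-verified Lean document; each statement's English description precedes it below -/
import Mathlib

section
/- Suppose real numbers x_f, y_f, d, β, ρ, θ_P0, θ_Pf, x̄0, ȳ0, v_x, v_y with ρ > 0 and v_x ≠ 0, and an integer n, satisfy the RSR geometric equations x_f + ρ·cos(θ_Pf − π/2) = ρ + d·cos β and y_f + ρ·sin(θ_Pf − π/2) = d·sin β, the collinearity condition (y_f − ȳ0)·v_x = v_y·(x_f − x̄0), the interception-time equation ρ·(θ_P0 − θ_Pf + 2nπ) + d = √((x_f − x̄0)² + (y_f − ȳ0)²) / √(v_x² + v_y²), and the sign condition (x_f − x̄0)/v_x ≥ 0. Then a1 + a2·sin β + a3·cos β = 0, where a1 = (ρ − ρ·sin θ_Pf)·v_y − ((v_y/v_x)·x̄0 − ȳ0 + ρ·cos θ_Pf)·v_x, a2 = −ρ + ρ·sin θ_Pf − (−x̄0/v_x − ρ·(θ_P0 − θ_Pf + 2nπ))·v_x, and a3 = (v_y/v_x)·x̄0 − ȳ0 + ρ·cos θ_Pf + (−x̄0/v_x − ρ·(θ_P0 − θ_Pf + 2nπ))·v_y. -/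
open Real

lemma sqrt_sq_add_sq_of_collinear {a b vx vy : ℝ} (hvx : vx ≠ 0) (hline : b * vx = vy * a)
    (hsign : 0 ≤ a / vx) :
    √(a ^ 2 + b ^ 2) = a / vx * √(vx ^ 2 + vy ^ 2) := by
  have hsq : a ^ 2 + b ^ 2 = (a / vx) ^ 2 * (vx ^ 2 + vy ^ 2) := by
    field_simp
    linear_combination (b * vx + vy * a) * hline
  rw [hsq, sqrt_mul (sq_nonneg _), sqrt_sq hsign]

lemma eq_mul_div_of_collinear {a b vx vy : ℝ} (hvx : vx ≠ 0) (hline : b * vx = vy * a) :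
    a = vx * (a / vx) ∧ b = vy * (a / vx) := by
  refine ⟨(mul_div_cancel₀ a hvx).symm, ?_⟩
  rw [← mul_div_assoc, ← hline, mul_div_cancel_right₀ b hvx]

theorem rsr_transcendental_equation_general
    (x_f y_f d β ρ θP0 θPf x0 y0 vx vy : ℝ) (n : ℤ)
    (hvx : vx ≠ 0)
    (hgeo1 : x_f + ρ * Real.cos (θPf - π / 2) = ρ + d * Real.cos β)
    (hgeo2 : y_f + ρ * Real.sin (θPf - π / 2) = d * Real.sin β)
    (hline : (y_f - y0) * vx = vy * (x_f - x0))
    (htime : ρ * (θP0 - θPf + 2 * (n : ℝ) * π) + d =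
      Real.sqrt ((x_f - x0) ^ 2 + (y_f - y0) ^ 2) / Real.sqrt (vx ^ 2 + vy ^ 2))
    (hsign : (x_f - x0) / vx ≥ 0) :
    ((ρ - ρ * Real.sin θPf) * vy - ((vy / vx) * x0 - y0 + ρ * Real.cos θPf) * vx)
      + (-ρ + ρ * Real.sin θPf - (-(x0 / vx) - ρ * (θP0 - θPf + 2 * (n : ℝ) * π)) * vx)
          * Real.sin β
      + ((vy / vx) * x0 - y0 + ρ * Real.cos θPf
          + (-(x0 / vx) - ρ * (θP0 - θPf + 2 * (n : ℝ) * π)) * vy) * Real.cos β = 0 := by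
  set L := ρ * (θP0 - θPf + 2 * (n : ℝ) * π)
  have hspeed : √(vx ^ 2 + vy ^ 2) ≠ 0 := by positivity
  have htime' : L + d = (x_f - x0) / vx := by
    rw [htime, sqrt_sq_add_sq_of_collinear hvx hline hsign, mul_div_cancel_right₀ _ hspeed]
  obtain ⟨hx, hy⟩ := eq_mul_div_of_collinear hvx hline
  rw [← htime'] at hx hy
  rw [cos_sub_pi_div_two] at hgeo1
  rw [sin_sub_pi_div_two] at hgeo2
  have hinv : vx * vx⁻¹ = 1 := mul_inv_cancel₀ hvx
  -- Both coordinates of the interception point are linear in `d`, with slopes `cos β - vx` and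
  -- `sin β - vy`; the claim is the vanishing of the determinant obtained by eliminating `d`.
  linear_combination (sin β - vy) * hgeo1 + (vx - cos β) * hgeo2
    + (vy - sin β) * hx + (cos β - vx) * hy + x0 * (sin β - vy) * hinv

theorem rsr_transcendental_equation
    (x_f y_f d β ρ θP0 θPf x0 y0 vx vy : ℝ) (n : ℤ)
    (hρ : 0 < ρ) (hvx : vx ≠ 0)
    (hgeo1 : x_f + ρ * Real.cos (θPf - π / 2) = ρ + d * Real.cos β)
    (hgeo2 : y_f + ρ * Real.sin (θPf - π / 2) = d * Real.sin β)
    (hline : (y_f - y0) * vx = vy * (x_f - x0))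
    (htime : ρ * (θP0 - θPf + 2 * (n : ℝ) * π) + d =
      Real.sqrt ((x_f - x0) ^ 2 + (y_f - y0) ^ 2) / Real.sqrt (vx ^ 2 + vy ^ 2))
    (hsign : (x_f - x0) / vx ≥ 0) :
    ((ρ - ρ * Real.sin θPf) * vy - ((vy / vx) * x0 - y0 + ρ * Real.cos θPf) * vx)
      + (-ρ + ρ * Real.sin θPf - (-(x0 / vx) - ρ * (θP0 - θPf + 2 * (n : ℝ) * π)) * vx)
          * Real.sin β
      + ((vy / vx) * x0 - y0 + ρ * Real.cos θPf
          + (-(x0 / vx) - ρ * (θP0 - θPf + 2 * (n : ℝ) * π)) * vy) * Real.cos β = 0 :=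
  rsr_transcendental_equation_general x_f y_f d β ρ θP0 θPf x0 y0 vx vy n hvx hgeo1 hgeo2 hline
    htime hsign
end

section
/- Suppose real numbers x_f, y_f, d, β, ρ, θ_P0, θ_Pf, x̄0, ȳ0, v_x, v_y with ρ > 0 and v_x ≠ 0, and an integer n, satisfy the LSL geometric equations x_f + ρ·cos(θ_Pf + π/2) = −ρ + d·cos β and y_f + ρ·sin(θ_Pf + π/2) = d·sin β, the collinearity condition (y_f − ȳ0)·v_x = v_y·(x_f − x̄0), the interception-time equation ρ·(θ_Pf − θ_P0 + 2nπ) + d = √((x_f − x̄0)² + (y_f − ȳ0)²) / √(v_x² + v_y²), and the sign condition (x_f − x̄0)/v_x ≥ 0. Then b1 + b2·sin β + b3·cos β = 0, where b1 = (−ρ + ρ·sin θ_Pf)·v_y − ((v_y/v_x)·x̄0 − ȳ0 − ρ·cos θ_Pf)·v_x, b2 = ρ − ρ·sin θ_Pf + (x̄0/v_x + ρ·(θ_Pf − θ_P0 + 2nπ))·v_x, and b3 = (−x̄0/v_x − ρ·(θ_Pf − θ_P0 + 2nπ))·v_y + (v_y/v_x)·x̄0 − ȳ0 − ρ·cos θ_Pf.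 -/
/-!
The target reaches the interception point at time `t = (x_f - x̄0) / v_x`; by collinearity and
the sign condition this `t` is exactly the distance-over-speed in the interception-time equation,
so the pursuer's path length `ρ φ + d` equals `t`. Both coordinates of the interception point are
then affine in `t`: `x̄0 + t v = (final circle data) + (t - ρ φ) (cos β, sin β)`. Eliminating `t`
from these two linear equations leaves a `2 × 2` determinant, which expanded in `sin β` and
`cos β` is `b1 + b2 sin β + b3 cos β`.
-/

open Real

lemma sub_eq_div_mul_of_collinear {x y x0 y0 vx vy : ℝ} (hvx : vx ≠ 0)
    (hline : (y - y0) * vx = vy * (x - x0)) :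
    x - x0 = (x - x0) / vx * vx ∧ y - y0 = (x - x0) / vx * vy := by
  refine ⟨(div_mul_cancel₀ _ hvx).symm, ?_⟩
  rw [div_mul_eq_mul_div, eq_div_iff hvx, hline, mul_comm]

lemma sqrt_sq_add_sq_mul_div_sqrt {t vx vy : ℝ} (ht : 0 ≤ t) (hv : vx ^ 2 + vy ^ 2 ≠ 0) :
    √((t * vx) ^ 2 + (t * vy) ^ 2) / √(vx ^ 2 + vy ^ 2) = t := by
  have hpos : 0 < √(vx ^ 2 + vy ^ 2) := sqrt_pos.2 (by positivity)
  rw [div_eq_iff hpos.ne', ← sqrt_sq ht, ← sqrt_mul (sq_nonneg t), sqrt_sq ht]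
  ring_nf

lemma cross_eq_of_common_time {x0 y0 vx vy P Q D β T : ℝ}
    (hx : x0 + T * vx = P + (T - D) * cos β) (hy : y0 + T * vy = Q + (T - D) * sin β) :
    (P - D * cos β - x0) * (vy - sin β) = (Q - D * sin β - y0) * (vx - cos β) := by
  linear_combination (sin β - vy) * hx + (vx - cos β) * hy

theorem lsl_transcendental_equation_general
    (x_f y_f d β ρ θP0 θPf x0 y0 vx vy : ℝ) (n : ℤ)
    (hvx : vx ≠ 0)
    (hgeo1 : x_f + ρ * Real.cos (θPf + π / 2) = -ρ + d * Real.cos β)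
    (hgeo2 : y_f + ρ * Real.sin (θPf + π / 2) = d * Real.sin β)
    (hline : (y_f - y0) * vx = vy * (x_f - x0))
    (htime : ρ * (θPf - θP0 + 2 * (n : ℝ) * π) + d =
      Real.sqrt ((x_f - x0) ^ 2 + (y_f - y0) ^ 2) / Real.sqrt (vx ^ 2 + vy ^ 2))
    (hsign : (x_f - x0) / vx ≥ 0) :
    ((-ρ + ρ * Real.sin θPf) * vy - ((vy / vx) * x0 - y0 - ρ * Real.cos θPf) * vx)
      + (ρ - ρ * Real.sin θPf + (x0 / vx + ρ * (θPf - θP0 + 2 * (n : ℝ) * π)) * vx)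
          * Real.sin β
      + ((-(x0 / vx) - ρ * (θPf - θP0 + 2 * (n : ℝ) * π)) * vy
          + (vy / vx) * x0 - y0 - ρ * Real.cos θPf) * Real.cos β = 0 := by
  set φ := θPf - θP0 + 2 * (n : ℝ) * π
  obtain ⟨hx, hy⟩ := sub_eq_div_mul_of_collinear hvx hline
  set T := (x_f - x0) / vx
  have hT : ρ * φ + d = T := by
    rw [htime, hx, hy, sqrt_sq_add_sq_mul_div_sqrt hsign (by positivity)]
  rw [cos_add_pi_div_two] at hgeo1
  rw [sin_add_pi_div_two] at hgeo2
  have hxT : x0 + T * vx = (-ρ + ρ * sin θPf) + (T - ρ * φ) * cos β := by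
    linear_combination -hx + hgeo1 + cos β * hT
  have hyT : y0 + T * vy = -ρ * cos θPf + (T - ρ * φ) * sin β := by
    linear_combination -hy + hgeo2 + sin β * hT
  linear_combination cross_eq_of_common_time hxT hyT + x0 * (sin β - vy) * inv_mul_cancel₀ hvx

theorem lsl_transcendental_equation
    (x_f y_f d β ρ θP0 θPf x0 y0 vx vy : ℝ) (n : ℤ)
    (hρ : 0 < ρ) (hvx : vx ≠ 0)
    (hgeo1 : x_f + ρ * Real.cos (θPf + π / 2) = -ρ + d * Real.cos β)
    (hgeo2 : y_f + ρ * Real.sin (θPf + π / 2) = d * Real.sin β)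
    (hline : (y_f - y0) * vx = vy * (x_f - x0))
    (htime : ρ * (θPf - θP0 + 2 * (n : ℝ) * π) + d =
      Real.sqrt ((x_f - x0) ^ 2 + (y_f - y0) ^ 2) / Real.sqrt (vx ^ 2 + vy ^ 2))
    (hsign : (x_f - x0) / vx ≥ 0) :
    ((-ρ + ρ * Real.sin θPf) * vy - ((vy / vx) * x0 - y0 - ρ * Real.cos θPf) * vx)
      + (ρ - ρ * Real.sin θPf + (x0 / vx + ρ * (θPf - θP0 + 2 * (n : ℝ) * π)) * vx)
          * Real.sin β
      + ((-(x0 / vx) - ρ * (θPf - θP0 + 2 * (n : ℝ) * π)) * vy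
          + (vy / vx) * x0 - y0 - ρ * Real.cos θPf) * Real.cos β = 0 :=
  lsl_transcendental_equation_general x_f y_f d β ρ θP0 θPf x0 y0 vx vy n hvx hgeo1 hgeo2 hline
    htime hsign
end

section
/- Let e1, e2, e3, e4, e5 be real constants and define E(β) = 1 + ((e1·cos β − e2·sin β)·(e3·cos β + e4·sin β) − (e1·sin β + e2·cos β + e5)·(e4·cos β − e3·sin β)) / (e3·cos β + e4·sin β)². Let β be a real number with cos(β/2) ≠ 0 and e3·cos β + e4·sin β ≠ 0, and set t = tan(β/2). Then E(β) = 0 if and only if p1·t⁴ + p2·t³ + p3·t² + p4·t + p5 = 0, where p1 = e3² + e1·e3 + e4·e5 − e2·e4, p2 = −4·e3·e4 + 2·e3·e5, p3 = 2·e1·e3 − 2·e2·e4 − 2·e3² + 4·e4², p4 = 4·e3·e4 + 2·e3·e5, and p5 = e3² + e1·e3 − e2·e4 − e4·e5. -/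
/-!
Clearing the denominator `(e3 cos β + e4 sin β)²`, `E β = 0` says that a polynomial of degree two
in `cos β, sin β` vanishes. The Weierstrass substitution `cos β = (1 - t²)/(1 + t²)`,
`sin β = 2t/(1 + t²)`, valid as soon as `cos (β/2) ≠ 0`, turns it into a rational function of
`t` with denominator `(1 + t²)²`, whose numerator is the quartic.
-/

open Real

theorem Real.cos_ne_neg_one_of_cos_half_ne_zero {x : ℝ} (h : cos (x / 2) ≠ 0) :
    cos x ≠ -1 := by
  have hdouble : cos x = 2 * cos (x / 2) ^ 2 - 1 := by
    rw [← cos_two_mul, mul_div_cancel₀ x two_ne_zero]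
  rw [hdouble]
  intro hx
  exact h (pow_eq_zero_iff two_ne_zero |>.mp (by linarith))

theorem one_add_div_sq_eq_zero_iff {K : Type*} [Field K] {d N : K} (hd : d ≠ 0) :
    1 + N / d ^ 2 = 0 ↔ d ^ 2 + N = 0 := by
  rw [one_add_div (pow_ne_zero 2 hd), div_eq_zero_iff, or_iff_left (pow_ne_zero 2 hd)]

theorem weierstrass_substitution_mul_sq {K : Type*} [Field K] (e1 e2 e3 e4 e5 t : K)
    (ht : 1 + t ^ 2 ≠ 0) :
    let c := (1 - t ^ 2) / (1 + t ^ 2)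
    let s := 2 * t / (1 + t ^ 2)
    ((e3 * c + e4 * s) ^ 2
        + ((e1 * c - e2 * s) * (e3 * c + e4 * s) - (e1 * s + e2 * c + e5) * (e4 * c - e3 * s)))
        * (1 + t ^ 2) ^ 2
      = (e3 ^ 2 + e1 * e3 + e4 * e5 - e2 * e4) * t ^ 4
        + (-(4 * e3 * e4) + 2 * e3 * e5) * t ^ 3
        + (2 * e1 * e3 - 2 * e2 * e4 - 2 * e3 ^ 2 + 4 * e4 ^ 2) * t ^ 2
        + (4 * e3 * e4 + 2 * e3 * e5) * t
        + (e3 ^ 2 + e1 * e3 - e2 * e4 - e4 * e5) := by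
  intro c s
  simp only [c, s]
  field_simp
  ring

theorem derivative_zero_iff_quartic
    (e1 e2 e3 e4 e5 : ℝ)
    (E : ℝ → ℝ)
    (hE : ∀ β, E β = 1 + ((e1 * Real.cos β - e2 * Real.sin β)
            * (e3 * Real.cos β + e4 * Real.sin β)
          - (e1 * Real.sin β + e2 * Real.cos β + e5)
            * (e4 * Real.cos β - e3 * Real.sin β))
        / (e3 * Real.cos β + e4 * Real.sin β) ^ 2)
    (β t : ℝ)
    (hcos : Real.cos (β / 2) ≠ 0)
    (hden : e3 * Real.cos β + e4 * Real.sin β ≠ 0)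
    (ht : t = Real.tan (β / 2)) :
    E β = 0 ↔
      (e3 ^ 2 + e1 * e3 + e4 * e5 - e2 * e4) * t ^ 4
        + (-(4 * e3 * e4) + 2 * e3 * e5) * t ^ 3
        + (2 * e1 * e3 - 2 * e2 * e4 - 2 * e3 ^ 2 + 4 * e4 ^ 2) * t ^ 2
        + (4 * e3 * e4 + 2 * e3 * e5) * t
        + (e3 ^ 2 + e1 * e3 - e2 * e4 - e4 * e5) = 0 := by
  have hpos : (1 : ℝ) + t ^ 2 ≠ 0 := by positivity
  rw [hE, one_add_div_sq_eq_zero_iff hden, ← mul_eq_zero_iff_right (pow_ne_zero 2 hpos),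
    cos_eq_two_mul_tan_half_div_one_sub_tan_half_sq β (cos_ne_neg_one_of_cos_half_ne_zero hcos),
    sin_eq_two_mul_tan_half_div_one_add_tan_half_sq β, ← ht]
  rw [weierstrass_substitution_mul_sq e1 e2 e3 e4 e5 t hpos]
end
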